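/- For every prime quadratic module M in M_n(R), the set p(supp M) of (1,1)-entries of elements of supp M = M ∩ (−M) is a prime ideal in R. -/

import Mathlib

open Matrix

/-- A quadratic module in `M_n(R)`. -/
def IsQM {n : ℕ} {R : Type*} [CommRing R] (M : Set (Matrix (Fin n) (Fin n) R)) : Prop :=
  (∀ A ∈ M, A.IsSymm) ∧ (1 : Matrix (Fin n) (Fin n) R) ∈ M ∧
  (∀ a ∈ M, ∀ b ∈ M, a + b ∈ M) ∧
  ∀ (A : Matrix (Fin n) (Fin n) R), ∀ m ∈ M, Aᵀ * m * A ∈ M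

/-- A prime quadratic module in `M_n(R)`. -/
def IsPrimeQM {n : ℕ} {R : Type*} [CommRing R] (M : Set (Matrix (Fin n) (Fin n) R)) : Prop :=
  IsQM M ∧ -(1 : Matrix (Fin n) (Fin n) R) ∉ M ∧
  ∀ (A : Matrix (Fin n) (Fin n) R) (r : R), A.IsSymm → r ^ 2 • A ∈ M →
    A ∈ M ∨ r • (1 : Matrix (Fin n) (Fin n) R) ∈ M ∩ (-M)

/-!
Write `S = M ∩ -M`. Congruence of `A` by the matrix units `E₀ᵢ`, summed over `i`, gives the
scalar matrix `A₀₀ • 1`, so `p(S)` is the set of `r` with `r • 1 ∈ S`. For such `r`, the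
identity `r² - (r + 1)² r + r² r + r = -r²` shows `-(r² • 1) ∈ M`; conversely, primality applied
to `A = -1` turns `-(r² • 1) ∈ M` back into `r • 1 ∈ S`. Closure under multiplication and
primality of `p(S)` then both come from `b² • (-(a² • 1)) = -((a b)² • 1)`.
-/

section

variable {n : ℕ} {R : Type*} [CommRing R] {M : Set (Matrix (Fin n) (Fin n) R)}

namespace IsQM

theorem one_mem (hM : IsQM M) : (1 : Matrix (Fin n) (Fin n) R) ∈ M := hM.2.1

theorem add_mem (hM : IsQM M) {a b : Matrix (Fin n) (Fin n) R} (ha : a ∈ M) (hb : b ∈ M) :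
    a + b ∈ M :=
  hM.2.2.1 a ha b hb

theorem transpose_mul_mul_mem (hM : IsQM M) (A : Matrix (Fin n) (Fin n) R)
    {m : Matrix (Fin n) (Fin n) R} (hm : m ∈ M) : Aᵀ * m * A ∈ M :=
  hM.2.2.2 A m hm

theorem zero_mem (hM : IsQM M) : (0 : Matrix (Fin n) (Fin n) R) ∈ M := by
  simpa using hM.transpose_mul_mul_mem 0 hM.one_mem

theorem sq_smul_mem (hM : IsQM M) (r : R) {m : Matrix (Fin n) (Fin n) R} (hm : m ∈ M) :
    r ^ 2 • m ∈ M := by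
  have h := hM.transpose_mul_mul_mem (r • 1) hm
  rwa [transpose_smul, transpose_one, smul_mul_assoc, one_mul, Matrix.mul_smul, mul_one,
    smul_smul, ← sq] at h

theorem diag_smul_one_mem (hM : IsQM M) {A : Matrix (Fin n) (Fin n) R} (hA : A ∈ M)
    (i : Fin n) : A i i • (1 : Matrix (Fin n) (Fin n) R) ∈ M := by
  have hsum : A i i • (1 : Matrix (Fin n) (Fin n) R)
      = ∑ j : Fin n, (single i j (1 : R))ᵀ * A * single i j 1 := by
    ext a b
    simp only [Matrix.sum_apply, mul_apply, single_apply, transpose_apply, Matrix.smul_apply,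
      one_apply, ite_and, smul_eq_mul]
    simp [Finset.sum_ite_eq, eq_comm]
  rw [hsum]
  exact Finset.sum_induction _ (· ∈ M) (fun _ _ ↦ hM.add_mem) hM.zero_mem
    (fun j _ ↦ hM.transpose_mul_mul_mem _ hA)

theorem diag_smul_one_mem_supp (hM : IsQM M) {A : Matrix (Fin n) (Fin n) R} (hA : A ∈ M ∩ -M)
    (i : Fin n) : A i i • (1 : Matrix (Fin n) (Fin n) R) ∈ M ∩ -M := by
  refine ⟨hM.diag_smul_one_mem hA.1 i, ?_⟩
  simpa [Set.mem_neg, neg_smul] using hM.diag_smul_one_mem (Set.mem_neg.mp hA.2) i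

theorem neg_sq_smul_one_mem (hM : IsQM M) {s : R}
    (hs : s • (1 : Matrix (Fin n) (Fin n) R) ∈ M ∩ -M) :
    -(s ^ 2 • (1 : Matrix (Fin n) (Fin n) R)) ∈ M := by
  have hneg : -(s • (1 : Matrix (Fin n) (Fin n) R)) ∈ M := Set.mem_neg.mp hs.2
  have hsum := hM.add_mem (hM.add_mem (hM.add_mem (hM.sq_smul_mem s hM.one_mem)
    (hM.sq_smul_mem (s + 1) hneg)) (hM.sq_smul_mem s hs.1)) hs.1
  have hid : s ^ 2 • (1 : Matrix (Fin n) (Fin n) R) + (s + 1) ^ 2 • -(s • 1)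
      + s ^ 2 • (s • 1) + s • 1 = -(s ^ 2 • 1) := by
    rw [smul_neg, smul_smul, smul_smul, ← neg_smul, ← neg_smul, ← add_smul, ← add_smul,
      ← add_smul]
    congr 1
    ring
  rwa [hid] at hsum

end IsQM

namespace IsPrimeQM

theorem isQM (hM : IsPrimeQM M) : IsQM M := hM.1

theorem neg_one_notMem (hM : IsPrimeQM M) : -(1 : Matrix (Fin n) (Fin n) R) ∉ M := hM.2.1

theorem mem_or_smul_one_mem_supp (hM : IsPrimeQM M) {A : Matrix (Fin n) (Fin n) R} (r : R)
    (hA : A.IsSymm) (h : r ^ 2 • A ∈ M) : A ∈ M ∨ r • (1 : Matrix (Fin n) (Fin n) R) ∈ M ∩ -M :=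
  hM.2.2 A r hA h

theorem smul_one_mem_supp_of_neg_sq (hM : IsPrimeQM M) {c : R}
    (hc : -(c ^ 2 • (1 : Matrix (Fin n) (Fin n) R)) ∈ M) :
    c • (1 : Matrix (Fin n) (Fin n) R) ∈ M ∩ -M :=
  (hM.mem_or_smul_one_mem_supp c (by simp [IsSymm]) (by rwa [smul_neg])).resolve_left
    hM.neg_one_notMem

theorem smul_one_mem_supp_mul_left (hM : IsPrimeQM M) (c : R) {x : R}
    (hx : x • (1 : Matrix (Fin n) (Fin n) R) ∈ M ∩ -M) :
    (c * x) • (1 : Matrix (Fin n) (Fin n) R) ∈ M ∩ -M := by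
  refine hM.smul_one_mem_supp_of_neg_sq ?_
  have h := hM.isQM.sq_smul_mem c (hM.isQM.neg_sq_smul_one_mem hx)
  rwa [smul_neg, smul_smul, ← mul_pow] at h

def suppIdeal (hM : IsPrimeQM M) : Ideal R where
  carrier := {r | r • (1 : Matrix (Fin n) (Fin n) R) ∈ M ∩ -M}
  add_mem' {a b} ha hb := by
    refine ⟨?_, ?_⟩
    · rw [add_smul]
      exact hM.isQM.add_mem ha.1 hb.1
    · rw [Set.mem_neg, add_smul, neg_add]
      exact hM.isQM.add_mem ha.2 hb.2
  zero_mem' := by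
    simpa [Set.mem_neg] using hM.isQM.zero_mem
  smul_mem' c _ hx := hM.smul_one_mem_supp_mul_left c hx

theorem mem_suppIdeal (hM : IsPrimeQM M) {r : R} :
    r ∈ hM.suppIdeal ↔ r • (1 : Matrix (Fin n) (Fin n) R) ∈ M ∩ -M :=
  Iff.rfl

theorem coe_suppIdeal [NeZero n] (hM : IsPrimeQM M) :
    (hM.suppIdeal : Set R) = (fun A : Matrix (Fin n) (Fin n) R ↦ A 0 0) '' (M ∩ -M) := by
  ext r
  refine ⟨fun hr ↦ ⟨r • 1, hr, by simp⟩, ?_⟩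
  rintro ⟨A, hA, rfl⟩
  exact hM.isQM.diag_smul_one_mem_supp hA 0

theorem suppIdeal_isPrime (hM : IsPrimeQM M) : hM.suppIdeal.IsPrime := by
  refine ⟨fun htop ↦ ?_, fun {a b} hab ↦ ?_⟩
  · have h1 : (1 : R) ∈ hM.suppIdeal := htop ▸ Submodule.mem_top
    exact hM.neg_one_notMem (by simpa using Set.mem_neg.mp ((hM.mem_suppIdeal).mp h1).2)
  · have hneg_sq := hM.isQM.neg_sq_smul_one_mem ((hM.mem_suppIdeal).mp hab)
    have hb : b ^ 2 • -(a ^ 2 • (1 : Matrix (Fin n) (Fin n) R)) ∈ M := by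
      rwa [smul_neg, smul_smul, ← mul_pow, mul_comm]
    exact (hM.mem_or_smul_one_mem_supp b (by simp [IsSymm]) hb).imp hM.smul_one_mem_supp_of_neg_sq id

end IsPrimeQM

end

theorem stmt9 {n : ℕ} [NeZero n] {R : Type*} [CommRing R]
    (M : Set (Matrix (Fin n) (Fin n) R)) (hM : IsPrimeQM M) :
    ∃ J : Ideal R, (J : Set R) = (fun A : Matrix (Fin n) (Fin n) R => A 0 0) '' (M ∩ (-M)) ∧
      J.IsPrime :=
  ⟨hM.suppIdeal, hM.coe_suppIdeal, hM.suppIdeal_isPrime⟩
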